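/- arXiv:2409.07371 — 3 statements merged into one kernel-verified Lean document; each statement's English description precedes it below -/
import Mathlib

section
/- Let n ≥ 1 and suppose (A,b) satisfies Setting B with constant δ ∈ (n/(n+π²),1]. Define γ := tr A/(|A|² + |b|²), Ã := γA and b̃ := γb. Then |Ã(x) − Iₙ|² + |b̃(x)|² ≤ 1 − δ for almost every x ∈ ℝⁿ, where Iₙ is the n×n identity matrix. -/
open MeasureTheory

noncomputable section

/-- The unit cell `Y = (0,1)^n`. -/
def unitCell (n : ℕ) : Set (Fin n → ℝ) := Set.univ.pi fun _ => Set.Ioo (0 : ℝ) 1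

/-- Frobenius norm squared of a matrix. -/
def frobSq {n : ℕ} (M : Matrix (Fin n) (Fin n) ℝ) : ℝ := ∑ i, ∑ j, (M i j) ^ 2

/-- Frobenius inner product of two matrices. -/
def frobInner {n : ℕ} (M N : Matrix (Fin n) (Fin n) ℝ) : ℝ := ∑ i, ∑ j, M i j * N i j

/-- Euclidean norm squared of a vector. -/
def euclSq {n : ℕ} (v : Fin n → ℝ) : ℝ := ∑ i, (v i) ^ 2

/-- Euclidean dot product. -/
def dotc {n : ℕ} (v w : Fin n → ℝ) : ℝ := ∑ i, v i * w i

/-- `ℤⁿ`-periodicity of a function on `ℝⁿ`. -/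
def IsPeriodic {n : ℕ} {α : Type*} (f : (Fin n → ℝ) → α) : Prop :=
  ∀ (x : Fin n → ℝ) (k : Fin n → ℤ), f (x + fun i => (k i : ℝ)) = f x

/-- Partial derivative in direction `i`. -/
def pd {n : ℕ} (f : (Fin n → ℝ) → ℝ) (i : Fin n) (x : Fin n → ℝ) : ℝ :=
  fderiv ℝ f x (Pi.single i 1)

/-- Gradient. -/
def grad {n : ℕ} (f : (Fin n → ℝ) → ℝ) (x : Fin n → ℝ) : Fin n → ℝ := fun i => pd f i x

/-- Hessian matrix. -/
def hess {n : ℕ} (f : (Fin n → ℝ) → ℝ) (x : Fin n → ℝ) : Matrix (Fin n) (Fin n) ℝ :=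
  Matrix.of fun i j => pd (pd f j) i x

/-- Laplacian. -/
def lap {n : ℕ} (f : (Fin n → ℝ) → ℝ) (x : Fin n → ℝ) : ℝ := ∑ i, pd (pd f i) i x

/-- Jacobian matrix of a vector field: `(jac w x) i j = ∂_j w_i (x)`. -/
def jac {n : ℕ} (w : (Fin n → ℝ) → Fin n → ℝ) (x : Fin n → ℝ) : Matrix (Fin n) (Fin n) ℝ :=
  Matrix.of fun i j => pd (fun y => w y i) j x

/-- Divergence of a vector field. -/
def divg {n : ℕ} (w : (Fin n → ℝ) → Fin n → ℝ) (x : Fin n → ℝ) : ℝ :=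
  ∑ i, pd (fun y => w y i) i x

/-- Setting B: symmetric-valued, measurable, `ℤⁿ`-periodic, essentially bounded coefficients,
uniform ellipticity, and the Cordes-type condition with constant `δ ∈ (n/(n+π²), 1]`. -/
structure SettingB {n : ℕ} (A : (Fin n → ℝ) → Matrix (Fin n) (Fin n) ℝ)
    (b : (Fin n → ℝ) → Fin n → ℝ) (lam Lam δ : ℝ) : Prop where
  symm : ∀ x, (A x).IsSymm
  measA : ∀ i j, Measurable fun x => A x i j
  measb : ∀ i, Measurable fun x => b x i
  perA : IsPeriodic A
  perb : IsPeriodic b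
  bddA : ∃ C : ℝ, ∀ᵐ x ∂(volume : Measure (Fin n → ℝ)), frobSq (A x) ≤ C
  bddb : ∃ C : ℝ, ∀ᵐ x ∂(volume : Measure (Fin n → ℝ)), euclSq (b x) ≤ C
  lam_pos : 0 < lam
  lam_le_Lam : lam ≤ Lam
  ellip : ∀ᵐ x ∂(volume : Measure (Fin n → ℝ)), ∀ ξ : Fin n → ℝ,
    lam * euclSq ξ ≤ dotc ξ (Matrix.mulVec (A x) ξ) ∧
      dotc ξ (Matrix.mulVec (A x) ξ) ≤ Lam * euclSq ξ
  delta_mem : δ ∈ Set.Ioc ((n : ℝ) / ((n : ℝ) + Real.pi ^ 2)) 1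
  cordes : ∀ᵐ x ∂(volume : Measure (Fin n → ℝ)),
    (frobSq (A x) + euclSq (b x)) / (Matrix.trace (A x)) ^ 2 ≤ 1 / ((n : ℝ) - 1 + δ)

/-- The renormalization function `γ = tr A / (|A|² + |b|²)`. -/
def gam {n : ℕ} (A : (Fin n → ℝ) → Matrix (Fin n) (Fin n) ℝ)
    (b : (Fin n → ℝ) → Fin n → ℝ) (x : Fin n → ℝ) : ℝ :=
  Matrix.trace (A x) / (frobSq (A x) + euclSq (b x))

/-- The constant `κ = (δ − n/(n+π²))·(n+π²)/π²`. -/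
def kappa (n : ℕ) (δ : ℝ) : ℝ :=
  (δ - (n : ℝ) / ((n : ℝ) + Real.pi ^ 2)) * (((n : ℝ) + Real.pi ^ 2) / Real.pi ^ 2)

/-- The invariant measure: measurable, `ℤⁿ`-periodic, square-integrable over `Y`,
with unit mass over `Y`, solving the stationary FPK equation in the very weak sense. -/
def IsInvariantMeasure {n : ℕ} (A : (Fin n → ℝ) → Matrix (Fin n) (Fin n) ℝ)
    (b : (Fin n → ℝ) → Fin n → ℝ) (r : (Fin n → ℝ) → ℝ) : Prop :=
  Measurable r ∧ IsPeriodic r ∧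
    IntegrableOn (fun x => (r x) ^ 2) (unitCell n) ∧
    (∫ x in unitCell n, r x) = 1 ∧
    ∀ φ : (Fin n → ℝ) → ℝ, ContDiff ℝ 2 φ → IsPeriodic φ →
      (∫ x in unitCell n,
        r x * (frobInner (A x) (hess φ x) + dotc (b x) (grad φ x))) = 0

/-- The bilinear form `B₂`. -/
def B2 {n : ℕ} (A : (Fin n → ℝ) → Matrix (Fin n) (Fin n) ℝ)
    (b : (Fin n → ℝ) → Fin n → ℝ) (v w : (Fin n → ℝ) → Fin n → ℝ) : ℝ :=
  (∫ x in unitCell n,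
    divg v x * (frobInner (gam A b x • A x) (jac w x) + dotc (gam A b x • b x) (w x)))
  + (1 / 2) * ∫ x in unitCell n,
      frobInner (jac v x - (jac v x).transpose) (jac w x - (jac w x).transpose)


lemma frobSq_smul_sub_one' {n : ℕ} (c : ℝ) (M : Matrix (Fin n) (Fin n) ℝ) :
    frobSq (c • M - 1) = c^2 * frobSq M - 2*c*Matrix.trace M + n := by
  unfold frobSq
  have h : ∀ i j : Fin n, ((c • M - 1) i j)^2
      = c^2*(M i j)^2 - 2*c*(M i j)*(if i = j then (1:ℝ) else 0) + (if i = j then (1:ℝ) else 0) := by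
    intro i j
    simp only [Matrix.sub_apply, Matrix.smul_apply, Matrix.one_apply, smul_eq_mul]
    split <;> ring
  simp only [h, Finset.sum_add_distrib, Finset.sum_sub_distrib]
  rw [Matrix.trace]
  simp only [Matrix.diag, Finset.sum_ite_eq, Finset.mem_univ, if_true, mul_ite, mul_one, mul_zero,
    Finset.sum_boole, Finset.mul_sum]
  simp [Finset.mul_sum]

lemma euclSq_smul' {n : ℕ} (c : ℝ) (v : Fin n → ℝ) : euclSq (c • v) = c^2 * euclSq v := by
  simp [euclSq, mul_pow, Finset.mul_sum]

/-- In Setting B, the renormalized coefficients `Ã = γA`, `b̃ = γb`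
satisfy `|Ã − Iₙ|² + |b̃|² ≤ 1 − δ` almost everywhere. -/
theorem stmt_4 {n : ℕ} (hn : 1 ≤ n)
    (A : (Fin n → ℝ) → Matrix (Fin n) (Fin n) ℝ) (b : (Fin n → ℝ) → Fin n → ℝ)
    (lam Lam δ : ℝ) (hAB : SettingB A b lam Lam δ) :
    ∀ᵐ x ∂(volume : Measure (Fin n → ℝ)),
      frobSq (gam A b x • A x - (1 : Matrix (Fin n) (Fin n) ℝ))
        + euclSq (gam A b x • b x) ≤ 1 - δ := by
  have hb := hAB.delta_mem
  filter_upwards [hAB.ellip, hAB.cordes] with x hell hcor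
  set t := Matrix.trace (A x) with ht
  set s := frobSq (A x) + euclSq (b x) with hs
  -- positivity of trace
  have hdiag : ∀ i : Fin n, lam ≤ A x i i := by
    intro i
    have := (hell (Pi.single i 1)).1
    have h1 : euclSq (Pi.single i (1:ℝ)) = 1 := by
      simp [euclSq, Pi.single_apply]
    have h2 : dotc (Pi.single i (1:ℝ)) (Matrix.mulVec (A x) (Pi.single i 1)) = A x i i := by
      simp [dotc, Pi.single_apply, Matrix.mulVec, dotProduct]
    rw [h1, h2, mul_one] at this
    exact this
  have htpos : 0 < t := by
    rw [ht, Matrix.trace]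
    have : (n : ℝ) * lam ≤ ∑ i, A x i i := by
      calc (n : ℝ) * lam = ∑ _i : Fin n, lam := by simp [mul_comm]
      _ ≤ ∑ i, A x i i := Finset.sum_le_sum fun i _ => hdiag i
    have hn' : (0:ℝ) < n := by exact_mod_cast hn
    have := mul_pos hn' hAB.lam_pos
    simpa [Matrix.diag] using lt_of_lt_of_le this ‹(n : ℝ) * lam ≤ ∑ i, A x i i›
  have hApos : 0 < frobSq (A x) := by
    obtain ⟨i⟩ : Nonempty (Fin n) := ⟨⟨0, hn⟩⟩
    have : lam ^ 2 ≤ (A x i i) ^ 2 := by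
      have := hdiag i
      nlinarith [hAB.lam_pos]
    calc (0:ℝ) < lam ^ 2 := pow_pos hAB.lam_pos 2
    _ ≤ (A x i i)^2 := this
    _ ≤ frobSq (A x) := by
        unfold frobSq
        have h1 : (A x i i)^2 ≤ ∑ j, (A x i j)^2 :=
          Finset.single_le_sum (f := fun j => (A x i j)^2) (fun j _ => sq_nonneg _)
            (Finset.mem_univ i)
        exact h1.trans (Finset.single_le_sum (f := fun k => ∑ j, (A x k j)^2)
          (fun k _ => Finset.sum_nonneg fun j _ => sq_nonneg _) (Finset.mem_univ i))
  have hspos : 0 < s := by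
    have : 0 ≤ euclSq (b x) := Finset.sum_nonneg fun i _ => sq_nonneg _
    rw [hs]; linarith
  have hd : (0:ℝ) < (n:ℝ) - 1 + δ := by
    have hn' : (1:ℝ) ≤ n := by exact_mod_cast hn
    have hδ : 0 < δ := lt_of_le_of_lt (by positivity) hb.1
    linarith
  -- from cordes: (n-1+δ) * s ≤ t^2
  have hkey : ((n:ℝ) - 1 + δ) * s ≤ t ^ 2 := by
    have h := hcor
    rw [div_le_div_iff₀ (by positivity) hd] at h
    linarith
  have hgam : gam A b x = t / s := rfl
  rw [frobSq_smul_sub_one', euclSq_smul', hgam]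
  have e1 : (t/s)^2 * frobSq (A x) + (t/s)^2 * euclSq (b x) = t^2/s := by
    have h2 : (t/s)^2 * s = t^2/s := by field_simp
    calc (t/s)^2 * frobSq (A x) + (t/s)^2 * euclSq (b x)
        = (t/s)^2 * (frobSq (A x) + euclSq (b x)) := by ring
      _ = (t/s)^2 * s := by rw [← hs]
      _ = t^2/s := h2
  have e2 : (t/s) * t = t^2/s := by field_simp
  have : (n:ℝ) - t^2/s ≤ 1 - δ := by
    rw [sub_le_sub_iff, ← sub_le_iff_le_add']
    have : (n:ℝ) - 1 + δ ≤ t^2/s := (le_div_iff₀ hspos).2 hkey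
    linarith
  nlinarith [this, e1, e2]
end
end

section
/- Let n ≥ 1. For every continuously differentiable ℤⁿ-periodic vector field w : ℝⁿ → ℝⁿ there holds ∫_Y (∇·w)² + (1/2)∫_Y |Dw − (Dw)ᵀ|² = ∫_Y |Dw|², where Dw is the Jacobian matrix of w, ∇·w = tr(Dw) its divergence, and |M| denotes the Frobenius norm of a matrix M. -/
open MeasureTheory

noncomputable section

/-! Expanding the squares entrywise, the identity reduces to
`∫_Y ∂ᵢwᵢ ∂ⱼwⱼ = ∫_Y ∂ⱼwᵢ ∂ᵢwⱼ`, a double integration by parts. As `w` is only `C¹`, second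
derivatives are avoided: for periodic `f`, `g` the integral of `∂ᵢ(f(· + v) g)` over `Y` vanishes,
which together with translation invariance of integrals of periodic functions gives
`∫_Y f(x + v) ∂ᵢg(x) = -∫_Y g(x - v) ∂ᵢf(x)`. Differentiating both sides in `v = t eⱼ` at `t = 0`
under the integral sign yields `∫_Y ∂ⱼf ∂ᵢg = ∫_Y ∂ᵢf ∂ⱼg`. -/

section

variable {n : ℕ}

namespace IsPeriodic

variable {α : Type*}

lemma comp_add_right {f : (Fin n → ℝ) → α} (hf : IsPeriodic f) (v : Fin n → ℝ) :
    IsPeriodic fun x => f (x + v) := fun x k => by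
  dsimp only
  rw [add_right_comm, hf]

lemma mul {f g : (Fin n → ℝ) → ℝ} (hf : IsPeriodic f) (hg : IsPeriodic g) :
    IsPeriodic fun x => f x * g x := fun x k => by
  simp only [hf x k, hg x k]

lemma apply_vadd_lattice {f : (Fin n → ℝ) → α} (hf : IsPeriodic f)
    (g : Submodule.span ℤ (Set.range (Pi.basisFun ℝ (Fin n)))) (x : Fin n → ℝ) :
    f (g +ᵥ x) = f x := by
  have hg := (Module.Basis.mem_span_iff_repr_mem ℤ _ _).mp g.2
  simp only [Pi.basisFun_repr] at hg
  choose k hk using hg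
  have hgk : (g : Fin n → ℝ) = fun i => (k i : ℝ) := funext fun i => (hk i).symm
  rw [Submodule.vadd_def, vadd_eq_add, add_comm, hgk, hf]

lemma exists_bound_of_continuous {E : Type*} [NormedAddCommGroup E] {f : (Fin n → ℝ) → E}
    (hf : IsPeriodic f) (hc : Continuous f) : ∃ C, ∀ x, ‖f x‖ ≤ C := by
  obtain ⟨C, hC⟩ := isCompact_Icc.exists_bound_of_continuousOn
    (hc.continuousOn (s := Set.Icc (0 : Fin n → ℝ) 1))
  refine ⟨C, fun x => ?_⟩
  have hfract : (x + fun i => ((-⌊x i⌋ : ℤ) : ℝ)) ∈ Set.Icc (0 : Fin n → ℝ) 1 :=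
    ⟨fun i => by simp [← sub_eq_add_neg, Int.fract_nonneg],
     fun i => by simp [← sub_eq_add_neg, (Int.fract_lt_one _).le]⟩
  simpa only [hf x] using hC _ hfract

end IsPeriodic

lemma isPeriodic_pd {f : (Fin n → ℝ) → ℝ} (hf : IsPeriodic f) (i : Fin n) :
    IsPeriodic (pd f i) := fun x k => by
  have hshift : (fun y => f (y + fun i => (k i : ℝ))) = f := funext fun y => hf y k
  rw [pd, pd, ← fderiv_comp_add_right, hshift]

lemma integrableOn_unitCell {E : Type*} [NormedAddCommGroup E] {f : (Fin n → ℝ) → E}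
    (hf : Continuous f) : IntegrableOn f (unitCell n) :=
  hf.integrableOn_Icc.mono_set fun _ hx =>
    ⟨fun i => (hx i trivial).1.le, fun i => (hx i trivial).2.le⟩

lemma unitCell_ae_eq_fundamentalDomain :
    unitCell n =ᵐ[volume] ZSpan.fundamentalDomain (Pi.basisFun ℝ (Fin n)) := by
  rw [ZSpan.fundamentalDomain_pi_basisFun]
  exact Measure.ae_eq_set_pi fun _ _ => Ioo_ae_eq_Ico

open scoped Pointwise in
lemma IsPeriodic.setIntegral_unitCell_comp_add_right {E : Type*} [NormedAddCommGroup E]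
    [NormedSpace ℝ E] {f : (Fin n → ℝ) → E} (hf : IsPeriodic f) (v : Fin n → ℝ) :
    ∫ x in unitCell n, f (x + v) = ∫ x in unitCell n, f x := by
  let L := Submodule.span ℤ (Set.range (Pi.basisFun ℝ (Fin n)))
  have : MeasurableConstVAdd L (Fin n → ℝ) :=
    inferInstanceAs (MeasurableConstVAdd L.toAddSubgroup _)
  have : VAddInvariantMeasure L (Fin n → ℝ) volume :=
    inferInstanceAs (VAddInvariantMeasure L.toAddSubgroup _ _)
  let D := ZSpan.fundamentalDomain (Pi.basisFun ℝ (Fin n))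
  have hD : IsAddFundamentalDomain L D := ZSpan.isAddFundamentalDomain _ volume
  have hshifted : (fun x => x + v) '' D = v +ᵥ D := by
    simp only [add_comm _ v]; exact Set.image_vadd (a := v) (t := D)
  rw [setIntegral_congr_set unitCell_ae_eq_fundamentalDomain,
    setIntegral_congr_set unitCell_ae_eq_fundamentalDomain,
    ← (measurePreserving_add_right volume v).setIntegral_image_emb
      (measurableEmbedding_addRight v), hshifted]
  exact (hD.vadd_of_comm v).setIntegral_eq hD hf.apply_vadd_lattice

lemma continuous_pd {f : (Fin n → ℝ) → ℝ} (hf : ContDiff ℝ 1 f) (i : Fin n) :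
    Continuous (pd f i) :=
  (hf.continuous_fderiv one_ne_zero).clm_apply continuous_const

lemma pd_comp_add_right (f : (Fin n → ℝ) → ℝ) (v : Fin n → ℝ) (i : Fin n)
    (x : Fin n → ℝ) :
    pd (fun y => f (y + v)) i x = pd f i (x + v) := by
  rw [pd, pd, fderiv_comp_add_right]

lemma pd_mul {f g : (Fin n → ℝ) → ℝ} {x : Fin n → ℝ} (hf : DifferentiableAt ℝ f x)
    (hg : DifferentiableAt ℝ g x) (i : Fin n) :
    pd (fun y => f y * g y) i x = pd f i x * g x + f x * pd g i x := by
  rw [pd, pd, pd, fderiv_fun_mul hf hg]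
  simp only [add_apply, smul_apply, smul_eq_mul]
  ring

lemma hasDerivAt_comp_add_smul_single {f : (Fin n → ℝ) → ℝ} (hf : ContDiff ℝ 1 f)
    (j : Fin n) (x : Fin n → ℝ) (t : ℝ) :
    HasDerivAt (fun s : ℝ => f (x + s • (Pi.single j 1 : Fin n → ℝ)))
      (pd f j (x + t • (Pi.single j 1 : Fin n → ℝ))) t := by
  set e : Fin n → ℝ := Pi.single j 1
  have hline : HasDerivAt (fun s : ℝ => x + s • e) e t := by
    simpa using ((hasDerivAt_id t).smul_const e).const_add x
  exact (hf.differentiable one_ne_zero _).hasFDerivAt.comp_hasDerivAt t hline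

lemma IsPeriodic.hasDerivAt_setIntegral_unitCell_comp_add_smul_single
    {f h : (Fin n → ℝ) → ℝ} (hf : ContDiff ℝ 1 f) (hfp : IsPeriodic f) (hh : Continuous h)
    (j : Fin n) :
    HasDerivAt
      (fun t : ℝ => ∫ x in unitCell n, f (x + t • (Pi.single j 1 : Fin n → ℝ)) * h x)
      (∫ x in unitCell n, pd f j x * h x) 0 := by
  set e : Fin n → ℝ := Pi.single j 1
  obtain ⟨C, hC⟩ := (isPeriodic_pd hfp j).exists_bound_of_continuous (continuous_pd hf j)
  have hcont : ∀ {g : (Fin n → ℝ) → ℝ}, Continuous g → ∀ t : ℝ,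
      Continuous fun x => g (x + t • e) * h x :=
    fun hg t => (hg.comp (continuous_add_const _)).mul hh
  have hbound :
      ∀ x, ∀ t ∈ Metric.ball (0 : ℝ) 1, ‖pd f j (x + t • e) * h x‖ ≤ C * |h x| :=
    fun x t _ => by
      rw [norm_mul, Real.norm_eq_abs, Real.norm_eq_abs]
      exact mul_le_mul_of_nonneg_right (hC _) (abs_nonneg _)
  have hderiv := hasDerivAt_integral_of_dominated_loc_of_deriv_le
    (μ := volume.restrict (unitCell n)) (x₀ := (0 : ℝ))
    (F' := fun t x => pd f j (x + t • e) * h x) (Metric.ball_mem_nhds (0 : ℝ) one_pos)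
    (Filter.Eventually.of_forall fun t => (hcont hf.continuous t).aestronglyMeasurable)
    (integrableOn_unitCell (hcont hf.continuous 0))
    (hcont (continuous_pd hf j) 0).aestronglyMeasurable
    (ae_of_all _ hbound) ((integrableOn_unitCell hh.abs).const_mul C)
    (ae_of_all _ fun x t _ => (hasDerivAt_comp_add_smul_single hf j x t).mul_const (h x))
  simpa using hderiv.2

lemma IsPeriodic.setIntegral_unitCell_pd_eq_zero {f : (Fin n → ℝ) → ℝ}
    (hf : ContDiff ℝ 1 f) (hfp : IsPeriodic f) (i : Fin n) :
    ∫ x in unitCell n, pd f i x = 0 := by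
  have hderiv := hfp.hasDerivAt_setIntegral_unitCell_comp_add_smul_single hf continuous_const
    (h := fun _ => 1) i
  simp only [mul_one, hfp.setIntegral_unitCell_comp_add_right] at hderiv
  exact hderiv.unique (hasDerivAt_const 0 _)

lemma IsPeriodic.setIntegral_unitCell_comp_add_mul_pd {f g : (Fin n → ℝ) → ℝ}
    (hf : ContDiff ℝ 1 f) (hfp : IsPeriodic f) (hg : ContDiff ℝ 1 g) (hgp : IsPeriodic g)
    (v : Fin n → ℝ) (i : Fin n) :
    ∫ x in unitCell n, f (x + v) * pd g i x = -∫ x in unitCell n, g (x - v) * pd f i x := by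
  have hfv : ContDiff ℝ 1 fun x => f (x + v) := hf.comp (contDiff_id.add contDiff_const)
  have hzero := ((hfp.comp_add_right v).mul hgp).setIntegral_unitCell_pd_eq_zero (hfv.mul hg) i
  have hprod : ∀ x, pd (fun x => f (x + v) * g x) i x
      = pd f i (x + v) * g x + f (x + v) * pd g i x := fun x => by
    rw [pd_mul (hfv.differentiable one_ne_zero x) (hg.differentiable one_ne_zero x),
      pd_comp_add_right]
  simp only [hprod] at hzero
  have hint₁ : IntegrableOn (fun x => pd f i (x + v) * g x) (unitCell n) :=
    integrableOn_unitCell (((continuous_pd hf i).comp (continuous_add_const v)).mul hg.continuous)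
  have hint₂ : IntegrableOn (fun x => f (x + v) * pd g i x) (unitCell n) :=
    integrableOn_unitCell (hfv.continuous.mul (continuous_pd hg i))
  rw [integral_add hint₁ hint₂] at hzero
  have htranslate : ∫ x in unitCell n, pd f i (x + v) * g x
      = ∫ x in unitCell n, g (x - v) * pd f i x := by
    simp_rw [sub_eq_add_neg]
    have hperiodic := (hgp.comp_add_right (-v)).mul (isPeriodic_pd hfp i)
    rw [← hperiodic.setIntegral_unitCell_comp_add_right v]
    simp only [add_neg_cancel_right, mul_comm]
  linarith

lemma IsPeriodic.setIntegral_unitCell_pd_mul_pd_comm {f g : (Fin n → ℝ) → ℝ}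
    (hf : ContDiff ℝ 1 f) (hfp : IsPeriodic f) (hg : ContDiff ℝ 1 g) (hgp : IsPeriodic g)
    (i j : Fin n) :
    ∫ x in unitCell n, pd f j x * pd g i x = ∫ x in unitCell n, pd f i x * pd g j x := by
  set e : Fin n → ℝ := Pi.single j 1
  have hΦ := hfp.hasDerivAt_setIntegral_unitCell_comp_add_smul_single hf (continuous_pd hg i) j
  have hΘ : HasDerivAt (fun s : ℝ => ∫ x in unitCell n, g (x + s • e) * pd f i x)
      (∫ x in unitCell n, pd g j x * pd f i x) (-0) := by
    rw [neg_zero]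
    exact hgp.hasDerivAt_setIntegral_unitCell_comp_add_smul_single hg (continuous_pd hf i) j
  have hΦΘ : (fun t : ℝ => ∫ x in unitCell n, f (x + t • e) * pd g i x)
      = fun t => -∫ x in unitCell n, g (x + (-t) • e) * pd f i x := funext fun t => by
    simp only [hfp.setIntegral_unitCell_comp_add_mul_pd hf hg hgp, neg_smul, sub_eq_add_neg]
  rw [hΦΘ] at hΦ
  have hderiv_eq := hΦ.unique (hΘ.comp 0 (hasDerivAt_neg 0)).neg
  simp only [mul_neg, mul_one, neg_neg] at hderiv_eq
  simp only [hderiv_eq, mul_comm]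

lemma frobSq_sub_transpose (M : Matrix (Fin n) (Fin n) ℝ) :
    frobSq (M - M.transpose) = 2 * frobSq M - 2 * frobInner M M.transpose := by
  have hswap : ∑ i, ∑ j, M j i ^ 2 = ∑ i, ∑ j, M i j ^ 2 := Finset.sum_comm
  have hexpand : ∑ i, ∑ j, (M i j - M j i) ^ 2
      = ∑ i, ∑ j, (M i j ^ 2 + M j i ^ 2 - 2 * (M i j * M j i)) :=
    Finset.sum_congr rfl fun i _ => Finset.sum_congr rfl fun j _ => by ring
  simp only [frobSq, frobInner, Matrix.sub_apply, Matrix.transpose_apply, hexpand,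
    Finset.sum_add_distrib, Finset.sum_sub_distrib, ← Finset.mul_sum, hswap]
  ring

lemma continuous_jac_apply {w : (Fin n → ℝ) → Fin n → ℝ} (hw : ContDiff ℝ 1 w)
    (i j : Fin n) :
    Continuous fun x => jac w x i j :=
  continuous_pd (contDiff_pi.mp hw i) j

lemma setIntegral_unitCell_sum_sum {F : Fin n → Fin n → (Fin n → ℝ) → ℝ}
    (hF : ∀ i j, Continuous (F i j)) :
    ∫ x in unitCell n, ∑ i, ∑ j, F i j x = ∑ i, ∑ j, ∫ x in unitCell n, F i j x := by
  rw [integral_finsetSum _ fun i _ =>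
    integrable_finsetSum _ fun j _ => integrableOn_unitCell (hF i j)]
  exact Finset.sum_congr rfl fun i _ =>
    integral_finsetSum _ fun j _ => integrableOn_unitCell (hF i j)

lemma IsPeriodic.setIntegral_unitCell_frobInner_jac_transpose
    {w : (Fin n → ℝ) → Fin n → ℝ} (hw : ContDiff ℝ 1 w) (hper : IsPeriodic w) :
    ∫ x in unitCell n, frobInner (jac w x) (jac w x).transpose
      = ∫ x in unitCell n, divg w x ^ 2 := by
  have hwc : ∀ i, ContDiff ℝ 1 fun y => w y i := contDiff_pi.mp hw
  have hwp : ∀ i, IsPeriodic fun y => w y i := fun i x k => congrFun (hper x k) i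
  have hdivg : ∀ x, divg w x ^ 2 = ∑ i, ∑ j, jac w x i i * jac w x j j := fun x => by
    rw [sq, divg, Finset.sum_mul_sum]; rfl
  simp only [frobInner, Matrix.transpose_apply, hdivg]
  rw [setIntegral_unitCell_sum_sum (F := fun i j x => jac w x i j * jac w x j i) fun i j =>
      (continuous_jac_apply hw i j).mul (continuous_jac_apply hw j i),
    setIntegral_unitCell_sum_sum (F := fun i j x => jac w x i i * jac w x j j) fun i j =>
      (continuous_jac_apply hw i i).mul (continuous_jac_apply hw j j)]
  exact Finset.sum_congr rfl fun i _ => Finset.sum_congr rfl fun j _ =>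
    (hwp i).setIntegral_unitCell_pd_mul_pd_comm (hwc i) (hwc j) (hwp j) i j

end

theorem stmt_15_general {n : ℕ}
    (w : (Fin n → ℝ) → Fin n → ℝ) (hw : ContDiff ℝ 1 w) (hper : IsPeriodic w) :
    (∫ x in unitCell n, (divg w x) ^ 2)
        + (1 / 2) * ∫ x in unitCell n, frobSq (jac w x - (jac w x).transpose)
      = ∫ x in unitCell n, frobSq (jac w x) := by
  have hsq : IntegrableOn (fun x => frobSq (jac w x)) (unitCell n) :=
    integrableOn_unitCell <| continuous_finsetSum _ fun i _ =>
      continuous_finsetSum _ fun j _ => (continuous_jac_apply hw i j).pow 2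
  have hinner : IntegrableOn (fun x => frobInner (jac w x) (jac w x).transpose) (unitCell n) :=
    integrableOn_unitCell <| continuous_finsetSum _ fun i _ =>
      continuous_finsetSum _ fun j _ =>
        (continuous_jac_apply hw i j).mul (continuous_jac_apply hw j i)
  simp only [frobSq_sub_transpose]
  rw [integral_sub (hsq.const_mul 2) (hinner.const_mul 2), integral_const_mul, integral_const_mul,
    hper.setIntegral_unitCell_frobInner_jac_transpose hw]
  ring

/-- for every `C¹` `ℤⁿ`-periodic vector field `w`,
`∫_Y (∇·w)² + (1/2)∫_Y |Dw − (Dw)ᵀ|² = ∫_Y |Dw|²`. -/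
theorem stmt_15 {n : ℕ} (hn : 1 ≤ n)
    (w : (Fin n → ℝ) → Fin n → ℝ) (hw : ContDiff ℝ 1 w) (hper : IsPeriodic w) :
    (∫ x in unitCell n, (divg w x) ^ 2)
        + (1 / 2) * ∫ x in unitCell n, frobSq (jac w x - (jac w x).transpose)
      = ∫ x in unitCell n, frobSq (jac w x) :=
  stmt_15_general w hw hper
end
end

section
/- Define A : ℝ² → ℝ^{2×2} and b : ℝ² → ℝ² by A(y) := [[2 + sign(cos(π y₁))·sin(π y₁), (1/2)sin(2π y₁)], [(1/2)sin(2π y₁), 2 + cos²(π y₁)]] and b(y) := (1/4 + (3/4)·sign(sin(2π y₁)))·(1,1) for y = (y₁,y₂) ∈ ℝ², where sign(t) equals 1 if t > 0, −1 if t < 0, and 0 if t = 0. Then for every y ∈ ℝ²: |A(y)|² + |b(y)|² ≤ (4/5)·(tr A(y))², i.e., the Cordes-type condition (|A|² + |b|²)/(tr A)² ≤ 1/(n−1+δ) holds with n = 2 and δ = 1/4; moreover 1/4 ∈ (2/(2+π²), 1]. -/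
open MeasureTheory

noncomputable section

/-- The diffusion matrix of the second numerical experiment (Setting B). -/
def Aex17 (y : Fin 2 → ℝ) : Matrix (Fin 2) (Fin 2) ℝ :=
  Matrix.of
    ![![2 + Real.sign (Real.cos (Real.pi * y 0)) * Real.sin (Real.pi * y 0),
        (1 / 2) * Real.sin (2 * Real.pi * y 0)],
      ![(1 / 2) * Real.sin (2 * Real.pi * y 0),
        2 + Real.cos (Real.pi * y 0) ^ 2]]

/-- The drift of the second numerical experiment (Setting B). -/
def bex17 (y : Fin 2 → ℝ) : Fin 2 → ℝ :=
  fun _ => 1 / 4 + (3 / 4) * Real.sign (Real.sin (2 * Real.pi * y 0))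

lemma aux17 (s c t o σ : ℝ) (h1 : s ^ 2 + c ^ 2 = 1) (ho : o = 1 / 2 * (2 * s * c))
    (ht : t = -1 * s ∨ (t = 0 * s ∧ c = 0) ∨ t = 1 * s)
    (hσ : σ = -1 ∨ σ = 0 ∨ σ = 1) :
    (2 + t) ^ 2 + o ^ 2 + (o ^ 2 + (2 + c ^ 2) ^ 2) +
        ((1 / 4 + 3 / 4 * σ) ^ 2 + (1 / 4 + 3 / 4 * σ) ^ 2) ≤
      4 / 5 * (2 + t + (2 + c ^ 2)) ^ 2 := by
  subst ho
  rcases ht with h | ⟨h, hc⟩ | h <;> subst h <;>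
  rcases hσ with h' | h' | h' <;> subst h' <;>
  first
  | (subst hc; nlinarith [sq_nonneg s])
  | nlinarith [sq_nonneg (s * c), sq_nonneg (1 + s), sq_nonneg (1 - s), sq_nonneg c,
      sq_nonneg s]

theorem stmt_17 :
    (∀ y : Fin 2 → ℝ,
      frobSq (Aex17 y) + euclSq (bex17 y)
        ≤ (4 / 5) * (Matrix.trace (Aex17 y)) ^ 2) ∧
      (1 : ℝ) / 4 ∈ Set.Ioc ((2 : ℝ) / (2 + Real.pi ^ 2)) 1 := by
  constructor
  · intro y
    have hpyth := Real.sin_sq_add_cos_sq (Real.pi * y 0)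
    have h2 : Real.sin (2 * Real.pi * y 0) = 2 * Real.sin (Real.pi * y 0) * Real.cos (Real.pi * y 0) := by
      rw [show 2 * Real.pi * y 0 = 2 * (Real.pi * y 0) by ring, Real.sin_two_mul]
    simp only [frobSq, euclSq, Fin.sum_univ_two, Matrix.trace_fin_two, Aex17, bex17,
      Matrix.of_apply, Matrix.cons_val', Matrix.cons_val_zero, Matrix.cons_val_one,
      Matrix.head_cons, Matrix.head_fin_const, Matrix.empty_val', Matrix.cons_val_fin_one]
    refine aux17 (Real.sin (Real.pi * y 0)) (Real.cos (Real.pi * y 0)) _ _ _ hpyth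
      (by rw [h2]) ?_ (Real.sign_apply_eq _)
    rcases Real.sign_apply_eq (Real.cos (Real.pi * y 0)) with h | h | h
    · exact Or.inl (by rw [h])
    · exact Or.inr (Or.inl ⟨by rw [h], Real.sign_eq_zero_iff.mp h⟩)
    · exact Or.inr (Or.inr (by rw [h]))
  · constructor
    · have hpi : 3 < Real.pi := Real.pi_gt_three
      rw [div_lt_div_iff₀ (by nlinarith) (by norm_num)]
      nlinarith
    · norm_num
end
end
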